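/- Let G = (V,E) be a DAG, i ∈ V, and A ⊆ V \ {i}. Suppose A contains a proper descendant of i. Fix ω ∈ (0,∞)^V. Then there exists Λ ∈ ℝ^E such that the covariance matrix Σ = (I−Λ)^{-T} diag(ω) (I−Λ)^{-1} satisfies ω_i ≠ Σ_{ii} − Σ_{i,A} (Σ_{A,A})^{-1} Σ_{A,i}. -/

import Mathlib

/-!
Put weight one on exactly the edges lying on a path from `i` to `k`. Then `i` has no weighted
parent, so the `i`-th column of `(I - Λ)⁻¹` is the unit vector and `Σ_{ii} = ω_i`, while
`Σ_{ki} = ω_i ((I - Λ)⁻¹)_{ik}` is a positive sum over paths, since `Λ` is nilpotent and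
nonnegative. As `Σ` is positive definite, so is `(Σ_{A,A})⁻¹`, and the subtracted quadratic form
in `Σ_{A,i} ≠ 0` is strictly positive: the conditional variance is strictly below `ω_i`.
-/

open Matrix

/-- The conditional variance `Σ_{ii} - Σ_{i,A} (Σ_{A,A})⁻¹ Σ_{A,i}` of variable `i`
given the variables in `A`. -/
noncomputable def condVar {V : Type*} [Fintype V] [DecidableEq V]
    (Cov : Matrix V V ℝ) (i : V) (A : Finset V) : ℝ :=
  Cov i i - ∑ a : A, ∑ b : A,
    Cov i a * (Cov.submatrix (Subtype.val : A → V) Subtype.val)⁻¹ a b * Cov b i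

namespace Matrix

variable {V : Type*} [Fintype V] [DecidableEq V]

section Acyclic

variable {E : V → V → Prop} {B : Matrix V V ℝ}

lemma exists_isChain_of_pow_apply_ne_zero (hB : ∀ a b, ¬ E a b → B a b = 0) :
    ∀ (m : ℕ) {a b : V}, (B ^ m) a b ≠ 0 → ∃ l : List V, (a :: l).IsChain E ∧ l.length = m
  | 0, a, _, _ => ⟨[], List.isChain_singleton a, rfl⟩
  | m + 1, a, b, h => by
    rw [pow_succ', mul_apply] at h
    obtain ⟨c, -, hc⟩ := Finset.exists_ne_zero_of_sum_ne_zero h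
    obtain ⟨l, hl, rfl⟩ := exists_isChain_of_pow_apply_ne_zero hB m (right_ne_zero_of_mul hc)
    have hac : E a c := not_not.mp (mt (hB a c) (left_ne_zero_of_mul hc))
    exact ⟨c :: l, List.isChain_cons_cons.mpr ⟨hac, hl⟩, rfl⟩

lemma pow_card_eq_zero_of_acyclic (hacyc : ∀ a, ¬ Relation.TransGen E a a)
    (hB : ∀ a b, ¬ E a b → B a b = 0) : B ^ Fintype.card V = 0 := by
  ext a b
  by_contra h
  obtain ⟨l, hl, hlen⟩ := exists_isChain_of_pow_apply_ne_zero hB _ h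
  have hpw : (a :: l).Pairwise (Relation.TransGen E) :=
    List.isChain_iff_pairwise.mp (hl.imp fun _ _ => .single)
  have hnd : (a :: l).Nodup :=
    hpw.imp fun {x y} (hxy : Relation.TransGen E x y) (he : x = y) => hacyc y (he ▸ hxy)
  simpa [hlen] using hnd.length_le_card

end Acyclic

section OneSub

variable {B : Matrix V V ℝ} {n : ℕ}

lemma inv_one_sub_eq_sum_pow (hnil : B ^ n = 0) :
    (1 - B)⁻¹ = ∑ m ∈ Finset.range n, B ^ m :=
  inv_eq_right_inv (by rw [mul_neg_geom_sum, hnil, sub_zero])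

lemma one_sub_mul_inv_one_sub (hnil : B ^ n = 0) : (1 - B) * (1 - B)⁻¹ = 1 := by
  rw [inv_one_sub_eq_sum_pow hnil, mul_neg_geom_sum, hnil, sub_zero]

lemma inv_one_sub_mul_one_sub (hnil : B ^ n = 0) : (1 - B)⁻¹ * (1 - B) = 1 := by
  rw [inv_one_sub_eq_sum_pow hnil, geom_sum_mul_neg, hnil, sub_zero]

lemma isUnit_inv_one_sub (hnil : B ^ n = 0) : IsUnit (1 - B)⁻¹ :=
  ⟨⟨_, 1 - B, inv_one_sub_mul_one_sub hnil, one_sub_mul_inv_one_sub hnil⟩, rfl⟩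

lemma inv_one_sub_apply_nonneg (hB : ∀ a b, 0 ≤ B a b) (hnil : B ^ n = 0) (a b : V) :
    0 ≤ (1 - B)⁻¹ a b := by
  rw [inv_one_sub_eq_sum_pow hnil, sum_apply]
  exact Finset.sum_nonneg fun m _ => pow_apply_nonneg hB m a b

lemma inv_one_sub_apply_pos_of_reflTransGen (hB : ∀ a b, 0 ≤ B a b) (hnil : B ^ n = 0)
    {a b : V} (hab : Relation.ReflTransGen (fun a c => 0 < B a c) a b) :
    0 < (1 - B)⁻¹ a b := by
  set S := (1 - B)⁻¹
  have hS := inv_one_sub_apply_nonneg hB hnil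
  have hSeq : S = 1 + B * S := by
    have h := one_sub_mul_inv_one_sub hnil
    rw [sub_mul, one_mul] at h
    exact eq_add_of_sub_eq h
  have hexpand : ∀ a, S a b = (1 : Matrix V V ℝ) a b + ∑ d, B a d * S d b := fun a => by
    rw [← mul_apply, ← add_apply, ← hSeq]
  have hterms : ∀ a, ∀ d ∈ Finset.univ, 0 ≤ B a d * S d b :=
    fun a d _ => mul_nonneg (hB a d) (hS d b)
  induction hab using Relation.ReflTransGen.head_induction_on with
  | refl =>
    rw [hexpand, one_apply_eq]
    exact add_pos_of_pos_of_nonneg one_pos (Finset.sum_nonneg (hterms b))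
  | @head a c hac _ ih =>
    have hone : 0 ≤ (1 : Matrix V V ℝ) a b := by rw [one_apply]; split_ifs <;> norm_num
    calc 0 < B a c * S c b := mul_pos hac ih
      _ ≤ ∑ d, B a d * S d b := Finset.single_le_sum (hterms a) (Finset.mem_univ c)
      _ ≤ S a b := by rw [hexpand]; exact le_add_of_nonneg_left hone

lemma inv_one_sub_apply_of_col_eq_zero (hnil : B ^ n = 0) {i : V} (hcol : ∀ c, B c i = 0)
    (j : V) : (1 - B)⁻¹ j i = (1 : Matrix V V ℝ) j i := by
  have h := congrFun (congrFun (inv_one_sub_mul_one_sub hnil) j) i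
  rwa [mul_sub, mul_one, sub_apply, mul_apply,
    Finset.sum_eq_zero fun c _ => by rw [hcol, mul_zero], sub_zero] at h

end OneSub

section Covariance

lemma transpose_mul_diagonal_mul_apply_of_col_eq_one {S : Matrix V V ℝ} {i : V}
    (hcol : ∀ j, S j i = (1 : Matrix V V ℝ) j i) (ω : V → ℝ) (a : V) :
    (Sᵀ * diagonal ω * S) a i = ω i * S i a := by
  rw [mul_apply]
  simp only [mul_diagonal, transpose_apply, hcol, one_apply, mul_ite, mul_one,
    mul_zero, Finset.sum_ite_eq', Finset.mem_univ, if_true]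
  ring

lemma posDef_transpose_mul_diagonal_mul {S : Matrix V V ℝ} (hS : Function.Injective S.mulVec)
    {ω : V → ℝ} (hω : ∀ a, 0 < ω a) : (Sᵀ * diagonal ω * S).PosDef := by
  simpa only [conjTranspose_eq_transpose_of_trivial] using
    (PosDef.diagonal hω).conjTranspose_mul_mul_same hS

end Covariance

end Matrix

lemma condVar_lt_apply_self {V : Type*} [Fintype V] [DecidableEq V] {C : Matrix V V ℝ}
    (hC : C.PosDef) {i k : V} {A : Finset V} (hkA : k ∈ A) (hki : C k i ≠ 0) :
    condVar C i A < C i i := by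
  set T := C.submatrix (Subtype.val : A → V) Subtype.val
  have hT : T⁻¹.PosDef := (hC.submatrix Subtype.val_injective).inv
  set v : A → ℝ := fun a => C a i
  have hv : v ≠ 0 := fun h => hki (congrFun h ⟨k, hkA⟩)
  have hquad : ∑ a : A, ∑ b : A, C i a * T⁻¹ a b * C b i = star v ⬝ᵥ T⁻¹ *ᵥ v := by
    simp only [dotProduct, mulVec, star_trivial, Finset.mul_sum, v]
    refine Finset.sum_congr rfl fun a _ => Finset.sum_congr rfl fun b _ => ?_
    rw [← hC.1.apply i a, star_trivial]
    ring
  rw [condVar, hquad]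
  linarith [hT.dotProduct_mulVec_pos hv]

section PathIndicator

variable {V : Type*} (E : V → V → Prop) (i k : V)

open scoped Classical in
noncomputable def pathIndicator : Matrix V V ℝ :=
  fun a b => if E a b ∧ Relation.ReflTransGen E i a ∧ Relation.ReflTransGen E b k then 1 else 0

variable {E i k}

lemma pathIndicator_eq_zero_of_not {a b : V} (h : ¬ E a b) : pathIndicator E i k a b = 0 :=
  if_neg fun h' => h h'.1

lemma pathIndicator_nonneg (a b : V) : 0 ≤ pathIndicator E i k a b := by
  unfold pathIndicator; split_ifs <;> norm_num

lemma pathIndicator_apply_source (hacyc : ∀ a, ¬ Relation.TransGen E a a) (c : V) :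
    pathIndicator E i k c i = 0 :=
  if_neg fun h => hacyc i (.tail' h.2.1 h.1)

lemma reflTransGen_pathIndicator_pos (h : Relation.ReflTransGen E i k) :
    Relation.ReflTransGen (fun a b => 0 < pathIndicator E i k a b) i k := by
  suffices ∀ a, Relation.ReflTransGen E a k → Relation.ReflTransGen E i a →
      Relation.ReflTransGen (fun a b => 0 < pathIndicator E i k a b) a k from this i h .refl
  intro a hak
  induction hak using Relation.ReflTransGen.head_induction_on with
  | refl => exact fun _ => .refl
  | @head a c hac hck ih =>
    intro hia
    refine .head ?_ (ih (hia.tail hac))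
    rw [pathIndicator, if_pos ⟨hac, hia, hck⟩]
    exact one_pos

end PathIndicator

theorem stmt5_general {V : Type*} [Fintype V] [DecidableEq V]
    (E : V → V → Prop) (hacyc : ∀ i, ¬ Relation.TransGen E i i)
    (i k : V) (A : Finset V)
    (hkA : k ∈ A) (hdesc : Relation.ReflTransGen E i k)
    (ω : V → ℝ) (hω : ∀ a, 0 < ω a) :
    ∃ Λ : Matrix V V ℝ, (∀ a b, ¬ E a b → Λ a b = 0) ∧
      ω i ≠ condVar (((1 - Λ)ᵀ)⁻¹ * Matrix.diagonal ω * (1 - Λ)⁻¹) i A := by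
  set Λ := pathIndicator E i k
  have hsupp : ∀ a b, ¬ E a b → Λ a b = 0 := fun _ _ => pathIndicator_eq_zero_of_not
  have hnil : Λ ^ Fintype.card V = 0 := pow_card_eq_zero_of_acyclic hacyc hsupp
  set S := (1 - Λ)⁻¹
  have hST : ((1 - Λ)ᵀ)⁻¹ = Sᵀ := by rw [transpose_nonsing_inv]
  have hcol : ∀ j, S j i = (1 : Matrix V V ℝ) j i :=
    inv_one_sub_apply_of_col_eq_zero hnil (pathIndicator_apply_source hacyc)
  have hSik : 0 < S i k := inv_one_sub_apply_pos_of_reflTransGen pathIndicator_nonneg hnil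
    (reflTransGen_pathIndicator_pos hdesc)
  have hPD : (Sᵀ * diagonal ω * S).PosDef :=
    posDef_transpose_mul_diagonal_mul (mulVec_injective_of_isUnit (isUnit_inv_one_sub hnil)) hω
  refine ⟨Λ, hsupp, ne_of_gt ?_⟩
  rw [hST]
  calc condVar (Sᵀ * diagonal ω * S) i A < (Sᵀ * diagonal ω * S) i i := by
        refine condVar_lt_apply_self hPD hkA ?_
        rw [transpose_mul_diagonal_mul_apply_of_col_eq_one hcol]
        exact mul_ne_zero (hω i).ne' hSik.ne'
    _ = ω i := by
        rw [transpose_mul_diagonal_mul_apply_of_col_eq_one hcol, hcol, one_apply_eq, mul_one]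

/-- if `A ⊆ V \ {i}` contains a proper descendant `k` of `i`, then for any
fixed positive error variances `ω` there is `Λ ∈ ℝ^E` such that the induced covariance
matrix `Σ = (I-Λ)^{-T} diag(ω) (I-Λ)^{-1}` satisfies
`ω i ≠ Σ_{ii} - Σ_{i,A}(Σ_{A,A})⁻¹Σ_{A,i}`. -/
theorem stmt5 {V : Type*} [Fintype V] [DecidableEq V]
    (E : V → V → Prop) (hacyc : ∀ i, ¬ Relation.TransGen E i i)
    (i k : V) (A : Finset V) (hiA : i ∉ A)
    (hkA : k ∈ A) (hki : k ≠ i) (hdesc : Relation.ReflTransGen E i k)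
    (ω : V → ℝ) (hω : ∀ a, 0 < ω a) :
    ∃ Λ : Matrix V V ℝ, (∀ a b, ¬ E a b → Λ a b = 0) ∧
      ω i ≠ condVar (((1 - Λ)ᵀ)⁻¹ * Matrix.diagonal ω * (1 - Λ)⁻¹) i A :=
  stmt5_general E hacyc i k A hkA hdesc ω hω
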